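/- Let n be a positive integer and let A and B be n×n circulant matrices over F_2 satisfying A·Aᵀ + B·Bᵀ = I_n. Then the [4n,2n] binary code whose generator matrix is (I_{2n} | M), where M is the 2n×2n block matrix with blocks A, B in the top row and Bᵀ, Aᵀ in the bottom row (i.e., the code is the row space of this matrix over F_2), is self-dual. -/

import Mathlib

open scoped BigOperators
open Matrix

/-- The (Hamming) weight of a binary vector: the number of nonzero coordinates. -/
def wt {m : ℕ} (x : Fin m → ZMod 2) : ℕ :=
  (Finset.univ.filter fun i => x i ≠ 0).card

/-- The dual code of a binary code `C` of length `m`, with respect to the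
standard inner product. -/
def dualCode {m : ℕ} (C : Submodule (ZMod 2) (Fin m → ZMod 2)) :
    Submodule (ZMod 2) (Fin m → ZMod 2) where
  carrier := {x | ∀ y ∈ C, ∑ i, x i * y i = 0}
  add_mem' := by
    intro a b ha hb y hy
    simp only [Set.mem_setOf_eq] at *
    simp only [Pi.add_apply, add_mul, Finset.sum_add_distrib, ha y hy, hb y hy, add_zero]
  zero_mem' := by
    intro y hy
    simp
  smul_mem' := by
    intro c a ha y hy
    simp only [Set.mem_setOf_eq] at *
    simp only [Pi.smul_apply, smul_eq_mul, mul_assoc, ← Finset.mul_sum, ha y hy, mul_zero]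

/-- A binary code is self-dual if it equals its dual code. -/
def IsSelfDual {m : ℕ} (C : Submodule (ZMod 2) (Fin m → ZMod 2)) : Prop :=
  C = dualCode C

/-- A code is singly even if it contains a codeword of weight ≡ 2 (mod 4). -/
def SinglyEven {m : ℕ} (C : Submodule (ZMod 2) (Fin m → ZMod 2)) : Prop :=
  ∃ x ∈ C, wt x % 4 = 2

/-- A code is doubly even if every codeword has weight divisible by 4. -/
def DoublyEven {m : ℕ} (C : Submodule (ZMod 2) (Fin m → ZMod 2)) : Prop :=
  ∀ x ∈ C, wt x % 4 = 0

/-- `HasMinWeight C d` : the minimum weight of a nonzero codeword of `C` is `d`. -/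
def HasMinWeight {m : ℕ} (C : Submodule (ZMod 2) (Fin m → ZMod 2)) (d : ℕ) : Prop :=
  (∃ x ∈ C, x ≠ 0 ∧ wt x = d) ∧ ∀ x ∈ C, x ≠ 0 → d ≤ wt x

/-- `Awt C w` : the number of codewords of `C` of weight `w`. -/
noncomputable def Awt {m : ℕ} (C : Submodule (ZMod 2) (Fin m → ZMod 2)) (w : ℕ) : ℕ :=
  Set.ncard {x : Fin m → ZMod 2 | x ∈ C ∧ wt x = w}

/-- Two codes of length `m` are equivalent if some permutation of the `m`
coordinates maps one onto the other. -/
def CodeEquiv {m : ℕ} (C D : Submodule (ZMod 2) (Fin m → ZMod 2)) : Prop :=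
  ∃ σ : Equiv.Perm (Fin m), ∀ x : Fin m → ZMod 2, x ∈ C ↔ (fun i => x (σ i)) ∈ D

/-- `HasCoveringRadius C r` : the covering radius of `C` is exactly `r`, i.e. every
vector is within Hamming distance `r` of a codeword, and some vector has distance
at least `r` from every codeword. -/
def HasCoveringRadius {m : ℕ} (C : Submodule (ZMod 2) (Fin m → ZMod 2)) (r : ℕ) : Prop :=
  (∀ v : Fin m → ZMod 2, ∃ c ∈ C, wt (v - c) ≤ r) ∧
  (∃ v : Fin m → ZMod 2, ∀ c ∈ C, r ≤ wt (v - c))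

/-- A matrix is circulant if each row is the cyclic shift of the previous one. -/
def IsCirculant {n : ℕ} (A : Matrix (Fin n) (Fin n) (ZMod 2)) : Prop :=
  ∃ v : Fin n → ZMod 2, A = Matrix.circulant v

/-- Entry of a matrix extended by zero to all of ℕ × ℕ. -/
def matEntry {n : ℕ} (A : Matrix (Fin n) (Fin n) (ZMod 2)) (a b : ℕ) : ZMod 2 :=
  if h : a < n ∧ b < n then A ⟨a, h.1⟩ ⟨b, h.2⟩ else 0

/-- The `(a, b)` entry (for `a < 2n`, `b < 4n`) of the generator matrix
`(I_{2n} | M)`, where `M` is the block matrix with blocks `A`, `B` in the top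
row and `Bᵀ`, `Aᵀ` in the bottom row. -/
def fourCircEntry {n : ℕ} (A B : Matrix (Fin n) (Fin n) (ZMod 2)) (a b : ℕ) : ZMod 2 :=
  if b < 2 * n then (if a = b then 1 else 0)
  else
    if a < n then
      (if b - 2 * n < n then matEntry A a (b - 2 * n) else matEntry B a (b - 2 * n - n))
    else
      (if b - 2 * n < n then matEntry B (b - 2 * n) (a - n)
       else matEntry A (b - 2 * n - n) (a - n))

/-- The four-circulant code of length `4n` determined by circulant matrices `A`
and `B`: the row space of the generator matrix `(I_{2n} | M)`, where `M` is the
block matrix with blocks `A`, `B` in the top row and `Bᵀ`, `Aᵀ` in the bottom row. -/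
def fourCircCode (n : ℕ) (A B : Matrix (Fin n) (Fin n) (ZMod 2)) :
    Submodule (ZMod 2) (Fin (4 * n) → ZMod 2) :=
  Submodule.span (ZMod 2)
    (Set.range fun i : Fin (2 * n) => fun j : Fin (4 * n) => fourCircEntry A B (i : ℕ) (j : ℕ))

/-- A code of length `m` is four-circulant if `m = 4n` and it is the row space of
a matrix `(I_{2n} | M)`, where `M` is the block matrix with blocks `A`, `B` in the
top row and `Bᵀ`, `Aᵀ` in the bottom row, for some `n × n` circulant matrices `A`, `B`. -/
def IsFourCirculant {m : ℕ} (C : Submodule (ZMod 2) (Fin m → ZMod 2)) : Prop :=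
  ∃ n : ℕ, m = 4 * n ∧
    ∃ A B : Matrix (Fin n) (Fin n) (ZMod 2), IsCirculant A ∧ IsCirculant B ∧
      C = Submodule.span (ZMod 2)
        (Set.range fun i : Fin (2 * n) => fun j : Fin m => fourCircEntry A B (i : ℕ) (j : ℕ))
/-!
Write `M = [[A, B], [Bᵀ, Aᵀ]]`. Circulant matrices commute with each other and with their
transposes, so in characteristic 2 the off-diagonal blocks of `M Mᵀ` cancel and
`A Aᵀ + B Bᵀ = I` gives `M Mᵀ = I`. The generator matrix `G = (I | M)` then satisfies
`G Gᵀ = I + M Mᵀ = 0`, so the code is self-orthogonal; its identity block gives it dimension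
`2n`, half the length, and since the dot product is nondegenerate the dual has dimension `2n`
as well.
-/

theorem mem_dualCode {m : ℕ} {C : Submodule (ZMod 2) (Fin m → ZMod 2)} {x : Fin m → ZMod 2} :
    x ∈ dualCode C ↔ ∀ y ∈ C, x ⬝ᵥ y = 0 :=
  Iff.rfl

theorem dualCode_eq_orthogonal {m : ℕ} (C : Submodule (ZMod 2) (Fin m → ZMod 2)) :
    dualCode C = (toBilin' (1 : Matrix (Fin m) (Fin m) (ZMod 2))).orthogonal C := by
  ext x
  simp [mem_dualCode, LinearMap.BilinForm.mem_orthogonal_iff, toBilin'_apply', dotProduct_comm x]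

theorem finrank_dualCode {m : ℕ} (C : Submodule (ZMod 2) (Fin m → ZMod 2)) :
    Module.finrank (ZMod 2) (dualCode C) = m - Module.finrank (ZMod 2) C := by
  rw [dualCode_eq_orthogonal, LinearMap.BilinForm.finrank_orthogonal
    (nondegenerate_of_det_ne_zero (by simp)).toBilin', Module.finrank_fin_fun]

section RowSpace

variable {ι : Type*} {m : ℕ} (G : Matrix ι (Fin m) (ZMod 2))

theorem span_row_le_dualCode (hG : G * Gᵀ = 0) :
    Submodule.span (ZMod 2) (Set.range G.row) ≤
      dualCode (Submodule.span (ZMod 2) (Set.range G.row)) := by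
  rw [Submodule.span_le]
  rintro _ ⟨i, rfl⟩
  rw [SetLike.mem_coe, mem_dualCode]
  intro y hy
  have hker : Submodule.span (ZMod 2) (Set.range G.row) ≤ LinearMap.ker (toBilin' 1 (G i)) := by
    rw [Submodule.span_le]
    rintro _ ⟨j, rfl⟩
    simpa [toBilin'_apply', mul_apply', Matrix.row] using congr_fun₂ hG i j
  simpa [toBilin'_apply', Matrix.row] using hker hy

theorem isSelfDual_span_row [Fintype ι] (hG : G * Gᵀ = 0) (hrank : 2 * G.rank = m) :
    IsSelfDual (Submodule.span (ZMod 2) (Set.range G.row)) := by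
  refine Submodule.eq_of_le_of_finrank_eq (span_row_le_dualCode G hG) ?_
  rw [finrank_dualCode, ← rank_eq_finrank_span_row]
  omega

end RowSpace

section BlockMatrix

variable {R m n : Type*} [Fintype m] [DecidableEq m]

theorem rank_fromCols_one [Field R] [Fintype n] (N : Matrix m n R) :
    (fromCols (1 : Matrix m m R) N).rank = Fintype.card m := by
  refine le_antisymm (rank_le_card_height _) ?_
  simpa [fromCols_mul_fromRows] using
    rank_mul_le_left (fromCols 1 N) (fromRows (1 : Matrix m m R) 0)

variable [CommRing R] [CharP R 2]

theorem fromCols_one_mul_transpose_eq_zero [Fintype n] {N : Matrix m n R} (hN : N * Nᵀ = 1) :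
    fromCols (1 : Matrix m m R) N * (fromCols (1 : Matrix m m R) N)ᵀ = 0 := by
  rw [transpose_fromCols, fromCols_mul_fromRows, transpose_one, one_mul, hN]
  exact ext fun i j => CharTwo.add_self_eq_zero _

theorem fromBlocks_mul_transpose_eq_one {A B : Matrix m m R} (hAB : Commute A B)
    (hA : Commute A Aᵀ) (hB : Commute B Bᵀ) (h : A * Aᵀ + B * Bᵀ = 1) :
    fromBlocks A B Bᵀ Aᵀ * (fromBlocks A B Bᵀ Aᵀ)ᵀ = 1 := by
  have add_self : ∀ X : Matrix m m R, X + X = 0 := fun X =>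
    ext fun i j => CharTwo.add_self_eq_zero (X i j)
  rw [fromBlocks_transpose, transpose_transpose, transpose_transpose, fromBlocks_multiply,
    ← fromBlocks_one, h, ← transpose_mul, ← transpose_mul, hAB.eq, add_self, add_self,
    ← hA.eq, ← hB.eq, add_comm, h]

end BlockMatrix

namespace IsCirculant

variable {n : ℕ} {A B : Matrix (Fin n) (Fin n) (ZMod 2)}

theorem transpose (hA : IsCirculant A) : IsCirculant Aᵀ := by
  obtain ⟨v, rfl⟩ := hA
  exact ⟨_, Fin.transpose_circulant v⟩

theorem commute (hA : IsCirculant A) (hB : IsCirculant B) : Commute A B := by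
  obtain ⟨v, rfl⟩ := hA
  obtain ⟨w, rfl⟩ := hB
  exact Fin.circulant_mul_comm v w

end IsCirculant

section FourCirculant

variable {n : ℕ}

def fourCircGen (A B : Matrix (Fin n) (Fin n) (ZMod 2)) :
    Matrix (Fin (2 * n)) (Fin (4 * n)) (ZMod 2) :=
  of fun i j => fourCircEntry A B i j

theorem fourCircCode_eq_span_row (A B : Matrix (Fin n) (Fin n) (ZMod 2)) :
    fourCircCode n A B = Submodule.span (ZMod 2) (Set.range (fourCircGen A B).row) :=
  rfl

variable (n) in
def halvesEquiv : Fin n ⊕ Fin n ≃ Fin (2 * n) :=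
  finSumFinEquiv.trans (finCongr (two_mul n).symm)

variable (n) in
def quartersEquiv : (Fin n ⊕ Fin n) ⊕ (Fin n ⊕ Fin n) ≃ Fin (4 * n) :=
  (Equiv.sumCongr (halvesEquiv n) (halvesEquiv n)).trans
    (finSumFinEquiv.trans (finCongr (by ring)))

@[simp] theorem halvesEquiv_inl (a : Fin n) : (halvesEquiv n (.inl a) : ℕ) = a := rfl

@[simp] theorem halvesEquiv_inr (a : Fin n) : (halvesEquiv n (.inr a) : ℕ) = n + a := rfl

@[simp] theorem quartersEquiv_inl (p : Fin n ⊕ Fin n) :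
    (quartersEquiv n (.inl p) : ℕ) = halvesEquiv n p := rfl

@[simp] theorem quartersEquiv_inr (p : Fin n ⊕ Fin n) :
    (quartersEquiv n (.inr p) : ℕ) = 2 * n + halvesEquiv n p := rfl

theorem fourCircGen_eq_submatrix (A B : Matrix (Fin n) (Fin n) (ZMod 2)) :
    fourCircGen A B = (fromCols 1 (fromBlocks A B Bᵀ Aᵀ)).submatrix
      (halvesEquiv n).symm (quartersEquiv n).symm := by
  ext i j
  obtain ⟨p, rfl⟩ := (halvesEquiv n).surjective i
  obtain ⟨q, rfl⟩ := (quartersEquiv n).surjective j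
  rw [submatrix_apply, Equiv.symm_apply_apply, Equiv.symm_apply_apply, fourCircGen, of_apply]
  rcases p with a | a <;> rcases q with (b | b) | (b | b) <;>
    simp [fourCircEntry, matEntry, one_apply, Fin.val_inj] <;>
    grind

end FourCirculant

theorem four_circulant_self_dual_general (n : ℕ)
    (A B : Matrix (Fin n) (Fin n) (ZMod 2))
    (hA : IsCirculant A) (hB : IsCirculant B)
    (hAB : A * Aᵀ + B * Bᵀ = 1) :
    IsSelfDual (fourCircCode n A B) ∧
      Module.finrank (ZMod 2) (fourCircCode n A B) = 2 * n := by
  have hM : fromBlocks A B Bᵀ Aᵀ * (fromBlocks A B Bᵀ Aᵀ)ᵀ = 1 :=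
    fromBlocks_mul_transpose_eq_one (hA.commute hB) (hA.commute hA.transpose)
      (hB.commute hB.transpose) hAB
  have hG : fourCircGen A B * (fourCircGen A B)ᵀ = 0 := by
    rw [fourCircGen_eq_submatrix, transpose_submatrix, submatrix_mul_equiv,
      fromCols_one_mul_transpose_eq_zero hM, submatrix_zero, Pi.zero_apply, Pi.zero_apply]
  have hrank : (fourCircGen A B).rank = 2 * n := by
    rw [fourCircGen_eq_submatrix, rank_submatrix, rank_fromCols_one, Fintype.card_sum,
      Fintype.card_fin, two_mul]
  rw [fourCircCode_eq_span_row]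
  exact ⟨isSelfDual_span_row _ hG (by omega), by rw [← rank_eq_finrank_span_row, hrank]⟩

/-- If `A` and `B` are `n × n` circulant matrices over `F_2` with
`A * Aᵀ + B * Bᵀ = I_n`, then the `[4n, 2n]` code with generator matrix
`(I_{2n} | M)`, where `M` has blocks `A`, `B` / `Bᵀ`, `Aᵀ`, is self-dual. -/
theorem four_circulant_self_dual (n : ℕ) (hn : 0 < n)
    (A B : Matrix (Fin n) (Fin n) (ZMod 2))
    (hA : IsCirculant A) (hB : IsCirculant B)
    (hAB : A * Aᵀ + B * Bᵀ = 1) :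
    IsSelfDual (fourCircCode n A B) ∧
      Module.finrank (ZMod 2) (fourCircCode n A B) = 2 * n :=
  four_circulant_self_dual_general n A B hA hB hAB
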